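/- arXiv:1611.02471 — 4 statements merged into one kernel-verified Lean document; each statement's English description precedes it below -/
import Mathlib

section
/- Let R be a commutative ring with nilradical n(R) and P a finitely generated projective R-module. Then P has a unimodular element if and only if P ⊗_R (R/n(R)) has a unimodular element. -/
open TensorProduct

/-- A finitely generated projective module `P` over a commutative ring `R`
has a unimodular element iff `P ⊗_R (R/nil(R))` has a unimodular element. -/
theorem hasUnimodular_iff_hasUnimodular_tensor_quotient_nilradical
    (R : Type*) [CommRing R] (P : Type*) [AddCommGroup P] [Module R P]
    [Module.Finite R P] [Module.Projective R P] :
    (∃ (p : P) (φ : P →ₗ[R] R), φ p = 1) ↔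
      (∃ (q : TensorProduct R (R ⧸ nilradical R) P)
         (ψ : TensorProduct R (R ⧸ nilradical R) P →ₗ[R ⧸ nilradical R]
            (R ⧸ nilradical R)), ψ q = 1) := by
  set A := R ⧸ nilradical R
  constructor
  · rintro ⟨p, φ, hφ⟩
    refine ⟨(1 : A) ⊗ₜ p,
      (AlgebraTensorModule.rid R A A).toLinearMap ∘ₗ φ.baseChange A, ?_⟩
    simp [hφ]
  · rintro ⟨q, ψ, hψ⟩
    -- lift q to an element of P
    have hsurj : ∀ x : A ⊗[R] P, ∃ p : P, (1 : A) ⊗ₜ p = x := by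
      intro x
      induction x using TensorProduct.induction_on with
      | zero => exact ⟨0, by simp⟩
      | tmul a p =>
        obtain ⟨r, rfl⟩ := Ideal.Quotient.mk_surjective a
        refine ⟨r • p, ?_⟩
        rw [TensorProduct.tmul_smul, TensorProduct.smul_tmul',
          ← Ideal.Quotient.algebraMap_eq, Algebra.algebraMap_eq_smul_one]
      | add x y hx hy =>
        obtain ⟨p, hp⟩ := hx; obtain ⟨p', hp'⟩ := hy
        exact ⟨p + p', by rw [TensorProduct.tmul_add, hp, hp']⟩
    obtain ⟨p, hp⟩ := hsurj q
    -- the R-linear map P → A given by p ↦ ψ (1 ⊗ p)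
    set f : P →ₗ[R] A := (ψ.restrictScalars R) ∘ₗ TensorProduct.mk R A P 1
    -- lift f through the quotient map using projectivity
    obtain ⟨φ, hφ⟩ := Module.projective_lifting_property
      ((nilradical R).mkQ) f Ideal.Quotient.mk_surjective
    have h1 : Ideal.Quotient.mk (nilradical R) (φ p) = 1 := by
      have := congrArg (fun g => g p) hφ
      simp only [LinearMap.comp_apply] at this
      simpa [f, hp, hψ] using this
    have hnil : IsNilpotent (φ p - 1) := by
      rw [← mem_nilradical, ← Ideal.Quotient.eq_zero_iff_mem, map_sub, h1,
        map_one, sub_self]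
    have hunit : IsUnit (φ p) := by
      simpa using hnil.isUnit_add_one
    obtain ⟨u, hu⟩ := hunit
    refine ⟨p, (u⁻¹ : Rˣ).val • φ, ?_⟩
    simp [hu.symm ▸ (by simp : ((u⁻¹ : Rˣ) : R) * (u : R) = 1), hu]
end

section
/- Let R be a commutative ring and D = R[X,Y]/(XY). Let P be a finitely generated projective D-module, P̄ = P/YP and P̃ = P/XP. Suppose p₁ is a unimodular element of P̄ and p₂ is a unimodular element of P̃ whose images in P/(X,Y)P coincide. Then there exists a unimodular element p of P mapping to p₁ in P̄ and to p₂ in P̃. -/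
open MvPolynomial

/-- The ring `D = R[X,Y]/(XY)`. -/
abbrev HodgeD (R : Type*) [CommRing R] :=
  MvPolynomial (Fin 2) R ⧸
    (Ideal.span {(MvPolynomial.X 0 : MvPolynomial (Fin 2) R) * MvPolynomial.X 1})

/-- The ideal `(X)` of `D`. -/
noncomputable abbrev HodgeIX (R : Type*) [CommRing R] : Ideal (HodgeD R) :=
  Ideal.span {Ideal.Quotient.mk _ (MvPolynomial.X 0)}

/-- The ideal `(Y)` of `D`. -/
noncomputable abbrev HodgeIY (R : Type*) [CommRing R] : Ideal (HodgeD R) :=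
  Ideal.span {Ideal.Quotient.mk _ (MvPolynomial.X 1)}

lemma aux_apply_mem {S M : Type*} [CommRing S] [AddCommGroup M] [Module S M]
    (I : Ideal S) (f : M →ₗ[S] S) {m : M} (hm : m ∈ I • (⊤ : Submodule S M)) :
    f m ∈ I := by
  refine Submodule.smul_induction_on hm (fun r hr n _ => ?_) (fun x y hx hy => ?_)
  · rw [map_smul, smul_eq_mul]
    exact I.mul_mem_right _ hr
  · rw [map_add]; exact I.add_mem hx hy

set_option maxHeartbeats 1000000 in
/-- Patching unimodular elements over `D = R[X,Y]/(XY)`: if `p₁` is unimodular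
modulo `(Y)` and `p₂` is unimodular modulo `(X)`, and `p₁ ≡ p₂` modulo `(X,Y)`,
then there is a unimodular element `p` of `P` with `p ≡ p₁ mod (Y)·P` and
`p ≡ p₂ mod (X)·P`. -/
theorem unimodular_patching_over_XY_quotient
    (R : Type*) [CommRing R]
    (P : Type*) [AddCommGroup P] [Module (HodgeD R) P]
    [Module.Finite (HodgeD R) P] [Module.Projective (HodgeD R) P]
    (p₁ p₂ : P)
    (h₁ : ∃ φ : P →ₗ[HodgeD R] HodgeD R ⧸ HodgeIY R, φ p₁ = 1)
    (h₂ : ∃ φ : P →ₗ[HodgeD R] HodgeD R ⧸ HodgeIX R, φ p₂ = 1)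
    (hcomp : p₁ - p₂ ∈ ((HodgeIX R ⊔ HodgeIY R) • ⊤ : Submodule (HodgeD R) P)) :
    ∃ p : P, (∃ φ : P →ₗ[HodgeD R] HodgeD R, φ p = 1) ∧
      p - p₁ ∈ (HodgeIY R • ⊤ : Submodule (HodgeD R) P) ∧
      p - p₂ ∈ (HodgeIX R • ⊤ : Submodule (HodgeD R) P) := by
  classical
  rw [Submodule.sup_smul] at hcomp
  obtain ⟨a, ha, b, hb, hab⟩ := Submodule.mem_sup.mp hcomp
  obtain ⟨φ₁, hφ₁⟩ := h₁
  obtain ⟨φ₂, hφ₂⟩ := h₂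
  obtain ⟨ψ₁, hψ₁⟩ := Module.projective_lifting_property (HodgeIY R).mkQ φ₁
    (Submodule.mkQ_surjective _)
  obtain ⟨ψ₂, hψ₂⟩ := Module.projective_lifting_property (HodgeIX R).mkQ φ₂
    (Submodule.mkQ_surjective _)
  set p : P := p₂ + a with hp
  have hpp₁ : p - p₁ ∈ (HodgeIY R • ⊤ : Submodule (HodgeD R) P) := by
    have hp1 : p₁ = a + b + p₂ := sub_eq_iff_eq_add.mp hab.symm
    have : p - p₁ = -b := by rw [hp, hp1]; abel
    rw [this]; exact neg_mem hb
  have hpp₂ : p - p₂ ∈ (HodgeIX R • ⊤ : Submodule (HodgeD R) P) := by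
    have : p - p₂ = a := by rw [hp]; abel
    rw [this]; exact ha
  -- ψ₁ p ≡ 1 mod IY
  have hy : ψ₁ p - 1 ∈ HodgeIY R := by
    have h1 : ψ₁ p₁ - 1 ∈ HodgeIY R := by
      have : (HodgeIY R).mkQ (ψ₁ p₁) = φ₁ p₁ := by rw [← hψ₁]; rfl
      rw [hφ₁] at this
      have : (HodgeIY R).mkQ (ψ₁ p₁) = (HodgeIY R).mkQ 1 := this
      rwa [Submodule.mkQ_apply, Submodule.mkQ_apply, Submodule.Quotient.eq] at this
    have h2 : ψ₁ p - ψ₁ p₁ ∈ HodgeIY R := by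
      rw [← map_sub]
      exact aux_apply_mem _ _ hpp₁
    have := (HodgeIY R).add_mem h2 h1
    simpa using this
  have hx : ψ₂ p - 1 ∈ HodgeIX R := by
    have h1 : ψ₂ p₂ - 1 ∈ HodgeIX R := by
      have : (HodgeIX R).mkQ (ψ₂ p₂) = φ₂ p₂ := by rw [← hψ₂]; rfl
      rw [hφ₂] at this
      have : (HodgeIX R).mkQ (ψ₂ p₂) = (HodgeIX R).mkQ 1 := this
      rwa [Submodule.mkQ_apply, Submodule.mkQ_apply, Submodule.Quotient.eq] at this
    have h2 : ψ₂ p - ψ₂ p₂ ∈ HodgeIX R := by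
      rw [← map_sub]
      exact aux_apply_mem _ _ hpp₂
    have := (HodgeIX R).add_mem h2 h1
    simpa using this
  -- product of IY and IX is zero
  have hprod : (ψ₁ p - 1) * (ψ₂ p - 1) = 0 := by
    have hmem : (ψ₁ p - 1) * (ψ₂ p - 1) ∈ HodgeIY R * HodgeIX R :=
      Ideal.mul_mem_mul hy hx
    have hzero : HodgeIY R * HodgeIX R = ⊥ := by
      rw [Ideal.span_singleton_mul_span_singleton]
      have : (Ideal.Quotient.mk (Ideal.span {(X 0 : MvPolynomial (Fin 2) R) * X 1}) (X 1)) *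
          (Ideal.Quotient.mk (Ideal.span {(X 0 : MvPolynomial (Fin 2) R) * X 1}) (X 0)) = 0 := by
        rw [← map_mul, Ideal.Quotient.eq_zero_iff_mem]
        exact Ideal.subset_span (by rw [mul_comm]; rfl)
      rw [this, Ideal.span_singleton_eq_bot.mpr rfl]
    rw [hzero] at hmem
    exact hmem
  refine ⟨p, ⟨ψ₁ + (1 - ψ₁ p) • ψ₂, ?_⟩, hpp₁, hpp₂⟩
  simp only [LinearMap.add_apply, LinearMap.smul_apply, smul_eq_mul]
  linear_combination -hprod
end

section
/- Let R be a commutative Noetherian ring with ht(𝒥(R)) ≥ 1, where 𝒥(R) is the Jacobson radical. Then dim(R/𝒥(R)) ≤ dim(R) − 1; consequently, by Bass's stable range theorem, every finitely generated stably free R-module of rank ≥ dim(R) is free provided its rank exceeds dim(R/𝒥(R)). -/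
open Order

/-- The height of an ideal: the infimum of the heights of the primes containing it. -/
noncomputable def idealHeight {R : Type*} [CommRing R] (I : Ideal R) : ℕ∞ :=
  ⨅ (p : PrimeSpectrum R) (_ : I ≤ p.asIdeal), Order.height p

/-!
Every prime containing `𝒥(R)` has height at least one, so every chain of primes above `𝒥(R)`
can be prolonged downwards by one more prime; hence `dim(R/𝒥(R)) + 1 ≤ dim R`.

The second half is Bass's cancellation theorem. Suppose `dim(R/𝒥(R)) < n` and let `(x, y)` be a
unimodular row of length `m + 1 > n`. Choosing the entries of `t` one at a time by prime avoidance,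
every minimal prime of `(y₁ + x t₁, …, yᵢ + x tᵢ)` avoiding `x` gets height at least `i`; for
`i = m` there is no such prime below a maximal ideal, so `y + x t` is unimodular. This works in the
Noetherian ring `R/𝒥(R)` and lifts to `R`, because an ideal that is the unit ideal modulo `𝒥(R)` is
the unit ideal. Shortening rows means that transvections move every unimodular vector of `R × Rᵐ`
to `(1, 0)`, so a free summand `R` can be cancelled from `R × M ≅ R × N`; cancelling the summands
of `Rˢ` one at a time turns `Q × Rˢ ≅ Rᵗ` into `Q ≅ Rᵗ⁻ˢ`.
-/

lemma Order.krullDim_add_one_le_of_strictMono {α β : Type*} [Preorder α] [Preorder β]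
    {f : α → β} (hf : StrictMono f) (hf_min : ∀ a, ¬IsMin (f a)) :
    krullDim α + 1 ≤ krullDim β := by
  cases isEmpty_or_nonempty α with
  | inl _ => simp [krullDim_eq_bot]
  | inr hα =>
    have : Nonempty β := hα.map f
    rw [krullDim_eq_iSup_length, krullDim_eq_iSup_length, ← WithBot.coe_one, ← WithBot.coe_add,
      ENat.iSup_add, WithBot.coe_le_coe, iSup_le_iff]
    intro l
    obtain ⟨b, hb⟩ := not_isMin_iff.mp (hf_min l.head)
    refine le_trans (le_of_eq ?_) (le_iSup _ ((l.map f hf).cons b hb))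
    simp [LTSeries.map]

lemma ringKrullDim_quotient_add_one_le {R : Type*} [CommRing R] {I : Ideal R}
    (hI : 1 ≤ idealHeight I) : ringKrullDim (R ⧸ I) + 1 ≤ ringKrullDim R := by
  rw [ringKrullDim_quotient]
  refine krullDim_add_one_le_of_strictMono (Subtype.strictMono_coe _) fun p hp => ?_
  have hle : idealHeight I ≤ height p.1 := iInf₂_le p.1 p.2
  rw [← height_eq_zero] at hp
  simpa [hp] using hI.trans hle

namespace Ideal

variable {A : Type*} [CommRing A]

lemma exists_add_mul_notMem_of_isAntichain {S : Finset (Ideal A)}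
    (hS_prime : ∀ q ∈ S, q.IsPrime) (hS : IsAntichain (· ≤ ·) (S : Set (Ideal A)))
    {a : A} (ha : ∀ q ∈ S, a ∉ q) (b : A) : ∃ t, ∀ q ∈ S, b + a * t ∉ q := by
  classical
  induction S using Finset.induction_on with
  | empty => exact ⟨0, by simp⟩
  | @insert q s hqs ih =>
    simp only [Finset.mem_insert, forall_eq_or_imp] at hS_prime ha ⊢
    obtain ⟨t, ht⟩ := ih hS_prime.2 (hS.subset (by simp)) ha.2
    by_cases hq : b + a * t ∈ q
    swap
    · exact ⟨t, hq, ht⟩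
    -- Shift `t` by some `c` lying in every prime of `s` but not in `q`.
    have hnle : ¬s.inf id ≤ q := by
      rw [hS_prime.1.inf_le']
      rintro ⟨q', hq', hle⟩
      exact hS (by simp [hq']) (by simp) (ne_of_mem_of_not_mem hq' hqs) hle
    obtain ⟨c, hc, hcq⟩ := SetLike.not_le_iff_exists.mp hnle
    refine ⟨t + c, ?_, fun q' hq' => ?_⟩
    · rw [mul_add, ← add_assoc, q.add_mem_iff_right hq]
      exact hS_prime.1.mul_notMem ha.1 hcq
    · have hcq' : a * c ∈ q' := q'.mul_mem_left a (Finset.inf_le (f := id) hq' hc)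
      rw [mul_add, ← add_assoc, q'.add_mem_iff_left hcq']
      exact ht q' hq'

lemma eq_top_of_map_quotientMk_eq_top {I K : Ideal A} (hI : I ≤ jacobson ⊥)
    (hK : K.map (Quotient.mk I) = ⊤) : K = ⊤ := by
  have := isLocalHom_of_le_jacobson_bot I hI
  obtain ⟨k, hk, hk1⟩ := (mem_map_iff_of_surjective _ Quotient.mk_surjective).mp
    (hK ▸ Submodule.mem_top : (1 : A ⧸ I) ∈ K.map (Quotient.mk I))
  exact K.eq_top_of_isUnit_mem hk (isUnit_of_map_unit _ _ (hk1 ▸ isUnit_one))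

variable [IsNoetherianRing A]

lemma exists_add_mul_forall_minimalPrimes_le_height {I : Ideal A} {a : A} {k : ℕ∞}
    (hI : ∀ q ∈ I.minimalPrimes, a ∉ q → k ≤ q.height) (b : A) :
    ∃ t, ∀ q ∈ (I ⊔ span {b + a * t}).minimalPrimes, a ∉ q → k + 1 ≤ q.height := by
  classical
  set S := (I.finite_minimalPrimes_of_isNoetherianRing A).toFinset.filter (a ∉ ·)
  have hS : ∀ q ∈ S, q ∈ I.minimalPrimes ∧ a ∉ q := by simp [S]
  obtain ⟨t, ht⟩ := exists_add_mul_notMem_of_isAntichain (fun q hq => (hS q hq).1.1.1)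
    ((setOfPred_minimal_antichain _).subset fun q hq => (hS q hq).1) (fun q hq => (hS q hq).2) b
  refine ⟨t, fun q hq haq => ?_⟩
  have := hq.1.1
  obtain ⟨p, hp, hpq⟩ := exists_minimalPrimes_le (le_sup_left.trans hq.1.2)
  have := hp.1.1
  have hap : a ∉ p := fun h => haq (hpq h)
  have hpS : p ∈ S := by simp [S, hp, hap]
  have hlt : p < q := lt_of_le_of_ne hpq fun h =>
    ht p hpS (h ▸ hq.1.2 (mem_sup_right (mem_span_singleton_self _)))
  calc k + 1 ≤ p.height + 1 := by gcongr; exact hI p hp hap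
    _ ≤ q.height := height_add_one_le_of_lt_of_isPrime hlt

lemma exists_add_smul_forall_minimalPrimes_le_height {I : Ideal A} {a : A} {k : ℕ∞}
    (hI : ∀ q ∈ I.minimalPrimes, a ∉ q → k ≤ q.height) {n : ℕ} (b : Fin n → A) :
    ∃ t : Fin n → A, ∀ q ∈ (I ⊔ span (Set.range (b + a • t))).minimalPrimes,
      a ∉ q → k + n ≤ q.height := by
  induction n generalizing I k with
  | zero => exact ⟨0, by simpa using hI⟩
  | succ n ih =>
    obtain ⟨t₀, ht₀⟩ := exists_add_mul_forall_minimalPrimes_le_height hI (b 0)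
    obtain ⟨t, ht⟩ := ih ht₀ (Fin.tail b)
    have hcons : b + a • Fin.cons t₀ t = Fin.cons (b 0 + a * t₀) (Fin.tail b + a • t) := by
      ext i
      cases i using Fin.cases <;> simp [Fin.tail]
    refine ⟨Fin.cons t₀ t, fun q hq haq => ?_⟩
    rw [hcons, Fin.range_cons, span_insert, ← sup_assoc] at hq
    calc k + ↑(n + 1) = k + 1 + n := by push_cast; ring
      _ ≤ q.height := ht q hq haq

end Ideal

/-- Bass's stable range condition `sr(R) ≤ n`. -/
def StableRangeLE (R : Type*) [CommRing R] (n : ℕ) : Prop :=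
  ∀ m ≥ n, ∀ (x : R) (y : Fin m → R), Ideal.span (insert x (Set.range y)) = ⊤ →
    ∃ t : Fin m → R, Ideal.span (Set.range (y + x • t)) = ⊤

theorem stableRangeLE_of_ringKrullDim_lt {A : Type*} [CommRing A] [IsNoetherianRing A] {n : ℕ}
    (hdim : ringKrullDim A < n) : StableRangeLE A n := by
  intro m hm x y hxy
  obtain ⟨t, ht⟩ := Ideal.exists_add_smul_forall_minimalPrimes_le_height (I := ⊥) (a := x)
    (k := 0) (by simp) y
  refine ⟨t, ?_⟩
  by_contra hne
  obtain ⟨M, hM, hle⟩ := Ideal.exists_le_maximal _ hne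
  have hxM : x ∉ M := fun hx => hM.ne_top <| top_le_iff.mp <| hxy ▸ Ideal.span_le.mpr <| by
    rintro _ (rfl | ⟨i, rfl⟩)
    · exact hx
    · simpa using M.sub_mem (hle (Ideal.subset_span ⟨i, rfl⟩)) (M.mul_mem_right (t i) hx)
  obtain ⟨q, hq, hqM⟩ := Ideal.exists_minimalPrimes_le hle
  have := hq.1.1
  have hmq : (m : ℕ∞) ≤ q.height := by
    simpa using ht q (by rwa [bot_sup_eq]) fun h => hxM (hqM h)
  have : (m : WithBot ℕ∞) < m := calc
    (m : WithBot ℕ∞) ≤ q.height := by exact_mod_cast hmq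
    _ ≤ ringKrullDim A := Ideal.height_le_ringKrullDim_of_isPrime
    _ < n := hdim
    _ ≤ m := by exact_mod_cast hm
  exact lt_irrefl _ this

variable {R : Type*} [CommRing R]

theorem StableRangeLE.of_quotient {I : Ideal R} (hI : I ≤ Ideal.jacobson ⊥) {n : ℕ}
    (h : StableRangeLE (R ⧸ I) n) : StableRangeLE R n := by
  intro m hm x y hxy
  let π := Ideal.Quotient.mk I
  obtain ⟨t', ht'⟩ := h m hm (π x) (π ∘ y) <| by
    rw [Set.range_comp, ← Set.image_insert_eq, ← Ideal.map_span, hxy, Ideal.map_top]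
  choose t ht using fun i => Ideal.Quotient.mk_surjective (I := I) (t' i)
  refine ⟨t, Ideal.eq_top_of_map_quotientMk_eq_top hI ?_⟩
  rw [Ideal.map_span, ← Set.range_comp, ← ht']
  congr 2
  ext i
  simp [π, ht]

lemma Ideal.span_insert_range_eq_top_of_apply_eq_one {m : ℕ} (F : (R × (Fin m → R)) →ₗ[R] R)
    {x : R} {y : Fin m → R} (hF : F (x, y) = 1) : Ideal.span (insert x (Set.range y)) = ⊤ := by
  have hxy : (x, y) = x • ((1 : R), (0 : Fin m → R)) + ∑ i, y i • ((0 : R), Pi.single i 1) := by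
    ext i
    · simp [Prod.fst_sum]
    · simp [Prod.snd_sum, Finset.sum_apply, Pi.single_apply]
  rw [Ideal.eq_top_iff_one, ← hF, hxy, map_add, map_sum, map_smul]
  refine add_mem (Ideal.mul_mem_right _ _ (Ideal.subset_span (Set.mem_insert x _)))
    (Ideal.sum_mem _ fun i _ => ?_)
  rw [map_smul]
  exact Ideal.mul_mem_right _ _ (Ideal.subset_span (Set.mem_insert_of_mem x ⟨i, rfl⟩))

theorem StableRangeLE.exists_linearEquiv_apply_eq {n m : ℕ} (h : StableRangeLE R n) (hm : n ≤ m)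
    {x : R} {y : Fin m → R} (hxy : Ideal.span (insert x (Set.range y)) = ⊤) :
    ∃ g : (R × (Fin m → R)) ≃ₗ[R] (R × (Fin m → R)), g (x, y) = (1, 0) := by
  obtain ⟨t, ht⟩ := h m hm x y hxy
  set y' := y + x • t
  obtain ⟨c, hc⟩ := Ideal.mem_span_range_iff_exists_fun.mp
    (ht ▸ Submodule.mem_top : 1 - x ∈ Ideal.span (Set.range y'))
  let f := LinearMap.fst R R (Fin m → R)
  let g : Module.Dual R (R × (Fin m → R)) := Fintype.linearCombination R c ∘ₗ LinearMap.snd R R _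
  have h₁ : f (0, t) = 0 := rfl
  have h₂ : g (1, 0) = 0 := by simp [g]
  have h₃ : f (0, -y') = 0 := rfl
  have e₁ : LinearEquiv.transvection h₁ (x, y) = (x, y') := by
    simp [LinearMap.transvection.apply, f, y']
  have e₂ : LinearEquiv.transvection h₂ (x, y') = (1, y') := by
    simp [LinearMap.transvection.apply, g, Fintype.linearCombination_apply, mul_comm, hc]
  have e₃ : LinearEquiv.transvection h₃ (1, y') = (1, 0) := by
    simp [LinearMap.transvection.apply, f]
  exact ⟨(LinearEquiv.transvection h₁).trans
    ((LinearEquiv.transvection h₂).trans (LinearEquiv.transvection h₃)), by simp [e₁, e₂, e₃]⟩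

lemma LinearEquiv.snd_symm_zero_snd_zero {M N : Type*} [AddCommGroup M] [Module R M]
    [AddCommGroup N] [Module R N] (σ : (R × M) ≃ₗ[R] (R × N)) (hσ : σ (1, 0) = (1, 0)) (x : M) :
    (σ.symm (0, (σ (0, x)).2)).2 = x := by
  have : ((0 : R), (σ (0, x)).2) = σ ((0, x) - (σ (0, x)).1 • (1, 0)) := by
    rw [map_sub, map_smul, hσ]
    ext <;> simp
  simp [this]

lemma LinearEquiv.nonempty_linearEquiv_of_prod_apply_eq {M N : Type*} [AddCommGroup M] [Module R M]
    [AddCommGroup N] [Module R N] (θ : (R × M) ≃ₗ[R] (R × N)) (hθ : θ (1, 0) = (1, 0)) :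
    Nonempty (M ≃ₗ[R] N) := by
  have hθ' : θ.symm (1, 0) = (1, 0) := by rw [← hθ, θ.symm_apply_apply]
  refine ⟨LinearEquiv.ofLinearMap (LinearMap.snd R R N ∘ₗ θ.toLinearMap ∘ₗ LinearMap.inr R R M)
    (LinearMap.snd R R M ∘ₗ θ.symm.toLinearMap ∘ₗ LinearMap.inr R R N) ?_ ?_⟩
  · ext x
    simpa using θ.symm.snd_symm_zero_snd_zero hθ' x
  · ext x
    simpa using θ.snd_symm_zero_snd_zero hθ x

def LinearEquiv.prodFinSucc (Q : Type*) [AddCommGroup Q] [Module R Q] (s : ℕ) :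
    (R × (Q × (Fin s → R))) ≃ₗ[R] Q × (Fin (s + 1) → R) :=
  (LinearEquiv.prodAssoc R R Q _).symm ≪≫ₗ
    (LinearEquiv.prodComm R R Q).prodCongr (LinearEquiv.refl R _) ≪≫ₗ
    LinearEquiv.prodAssoc R Q R _ ≪≫ₗ
    (LinearEquiv.refl R Q).prodCongr (Fin.consLinearEquiv R fun _ => R)

theorem StableRangeLE.free_of_linearEquiv {Q : Type*} [AddCommGroup Q] [Module R Q] {s t : ℕ}
    (h : StableRangeLE R (t - s)) (hst : s ≤ t) (e : (Q × (Fin s → R)) ≃ₗ[R] (Fin t → R)) :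
    Module.Free R Q := by
  induction s generalizing t with
  | zero => exact Module.Free.of_equiv (LinearEquiv.prodUnique.symm.trans e).symm
  | succ s ih =>
    obtain _ | m := t
    · omega
    rw [Nat.add_sub_add_right] at h
    let ψ : (R × (Q × (Fin s → R))) ≃ₗ[R] (R × (Fin m → R)) :=
      LinearEquiv.prodFinSucc Q s ≪≫ₗ e ≪≫ₗ (Fin.consLinearEquiv R fun _ => R).symm
    obtain ⟨g, hg⟩ := h.exists_linearEquiv_apply_eq (Nat.sub_le m s)
      (Ideal.span_insert_range_eq_top_of_apply_eq_one (x := (ψ (1, 0)).1) (y := (ψ (1, 0)).2)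
        (LinearMap.fst R R _ ∘ₗ ψ.symm.toLinearMap) (by simp))
    obtain ⟨e'⟩ := (ψ ≪≫ₗ g).nonempty_linearEquiv_of_prod_apply_eq hg
    exact ih h (by omega) e'

theorem dim_quotient_jacobson_le_and_stablyFree_free_general
    (R : Type u) [CommRing R] [IsNoetherianRing R]
    (hht : 1 ≤ idealHeight (Ideal.jacobson (⊥ : Ideal R))) :
    ringKrullDim (R ⧸ Ideal.jacobson (⊥ : Ideal R)) + 1 ≤ ringKrullDim R ∧
    ∀ (Q : Type u) (_ : AddCommGroup Q) (_ : Module R Q) (s t : ℕ), s ≤ t →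
      Module.Finite R Q →
      Nonempty ((Q × (Fin s → R)) ≃ₗ[R] (Fin t → R)) →
      ringKrullDim R ≤ ((t - s : ℕ) : WithBot ℕ∞) →
      ringKrullDim (R ⧸ Ideal.jacobson (⊥ : Ideal R)) < ((t - s : ℕ) : WithBot ℕ∞) →
      Module.Free R Q := by
  refine ⟨ringKrullDim_quotient_add_one_le hht, fun Q _ _ s t hst _ ⟨e⟩ _ hdim => ?_⟩
  exact ((stableRangeLE_of_ringKrullDim_lt hdim).of_quotient le_rfl).free_of_linearEquiv hst e

/-- If the Jacobson radical of a Noetherian ring `R` of finite Krull dimension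
has height `≥ 1`, then `dim(R/𝒥(R)) ≤ dim R − 1`; consequently (Bass), every
finitely generated stably free `R`-module whose rank is at least `dim R` and
exceeds `dim(R/𝒥(R))` is free. -/
theorem dim_quotient_jacobson_le_and_stablyFree_free
    (R : Type u) [CommRing R] [IsNoetherianRing R]
    (hfin : ringKrullDim R < ⊤)
    (hht : 1 ≤ idealHeight (Ideal.jacobson (⊥ : Ideal R))) :
    ringKrullDim (R ⧸ Ideal.jacobson (⊥ : Ideal R)) + 1 ≤ ringKrullDim R ∧
    ∀ (Q : Type u) (_ : AddCommGroup Q) (_ : Module R Q) (s t : ℕ), s ≤ t →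
      Module.Finite R Q →
      Nonempty ((Q × (Fin s → R)) ≃ₗ[R] (Fin t → R)) →
      ringKrullDim R ≤ ((t - s : ℕ) : WithBot ℕ∞) →
      ringKrullDim (R ⧸ Ideal.jacobson (⊥ : Ideal R)) < ((t - s : ℕ) : WithBot ℕ∞) →
      Module.Free R Q :=
  dim_quotient_jacobson_le_and_stablyFree_free_general R hht
end

section
/- Let R be a commutative Noetherian ring and 𝒜 the ring obtained from R[T,T⁻¹] by inverting all special monic polynomials of R[T] (monic polynomials f with f(0) = 1). Then dim(𝒜) ≤ dim(R). -/
/-!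
A prime `Q` of `𝒜` has the same height as its contraction `P` to `R[X]`, a prime containing
neither `X` nor any special monic polynomial; put `𝔭 = P ∩ R`. If `𝔭` is maximal then
`P = 𝔭[X]`, since otherwise the image of `P` in `(R/𝔭)[X]` would be a nonzero prime not
containing `X`, and over a field such a prime contains a special monic polynomial, which lifts
to one in `P`; hence `ht P = ht 𝔭`. If `𝔭` is not maximal it lies strictly below a maximal
ideal `𝔪`, and `ht P ≤ ht 𝔭 + 1 ≤ ht 𝔪`.
-/

/-- The multiplicative set of special monic polynomials (monic with constant
coefficient `1`) in `R[T]`. -/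
def specialMonicSubmonoid (R : Type*) [CommRing R] [Nontrivial R] :
    Submonoid (Polynomial R) where
  carrier := {f | f.Monic ∧ f.coeff 0 = 1}
  one_mem' := ⟨Polynomial.monic_one, by simp⟩
  mul_mem' := fun hf hg => ⟨hf.1.mul hg.1, by
    rw [Polynomial.mul_coeff_zero, hf.2, hg.2, one_mul]⟩

open Polynomial Ideal

theorem exists_map_eq_of_mem_specialMonicSubmonoid {R S : Type*} [CommRing R] [Nontrivial R]
    [CommRing S] [Nontrivial S] {φ : R →+* S} (hφ : Function.Surjective φ) {f : S[X]}
    (hf : f ∈ specialMonicSubmonoid S) : ∃ g ∈ specialMonicSubmonoid R, g.map φ = f := by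
  obtain ⟨hmonic, hcoeff⟩ := hf
  rcases Nat.eq_zero_or_pos f.natDegree with hdeg | hdeg
  · exact ⟨1, one_mem _, by rw [Polynomial.map_one, hmonic.natDegree_eq_zero.mp hdeg]⟩
  obtain ⟨g, hgf, hgdeg, hgmonic⟩ :=
    lifts_and_degree_eq_and_monic (map_surjective φ hφ f) hmonic
  refine ⟨g + C (1 - g.coeff 0), ⟨?_, by simp⟩, ?_⟩
  · refine hgmonic.add_of_left (degree_C_le.trans_lt ?_)
    rwa [hgdeg, degree_eq_natDegree hmonic.ne_zero, Nat.cast_pos]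
  · have : φ (g.coeff 0) = 1 := by rw [← coeff_map, hgf, hcoeff]
    simp [hgf, this]

theorem eq_bot_of_disjoint_specialMonicSubmonoid {K : Type*} [Field K] {P : Ideal K[X]}
    [hP : P.IsPrime] (hX : X ∉ P) (hS : Disjoint (specialMonicSubmonoid K : Set K[X]) P) :
    P = ⊥ := by
  by_contra hne
  obtain ⟨f, hfP, hf0⟩ := Submodule.exists_mem_ne_zero_of_ne_bot hne
  obtain ⟨g, hfg, hXg⟩ := exists_eq_pow_rootMultiplicity_mul_and_not_dvd f hf0 0
  rw [C_0, sub_zero] at hfg hXg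
  have hgP : g ∈ P := by
    rw [hfg] at hfP
    exact (hP.mem_or_mem hfP).resolve_left fun h ↦ hX (hP.mem_of_pow_mem _ h)
  have hg0 : g ≠ 0 := by rintro rfl; simp at hXg
  set h := g * C g.leadingCoeff⁻¹
  have hh0 : h.coeff 0 ≠ 0 := by simpa [h, X_dvd_iff, hg0] using hXg
  have hspecial : h * (X + C (h.coeff 0)⁻¹) ∈ specialMonicSubmonoid K :=
    ⟨(monic_mul_leadingCoeff_inv hg0).mul (monic_X_add_C _), by simp [mul_coeff_zero, hh0]⟩
  exact Set.disjoint_left.mp hS hspecial (P.mul_mem_right _ (P.mul_mem_right _ hgP))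

theorem eq_map_under_of_disjoint_specialMonicSubmonoid {R : Type*} [CommRing R] [Nontrivial R]
    {P : Ideal R[X]} [P.IsPrime] [(P.under R).IsMaximal] (hX : X ∉ P)
    (hS : Disjoint (specialMonicSubmonoid R : Set R[X]) P) : P = (P.under R).map C := by
  set 𝔪 := P.under R
  let _ : Field (R ⧸ 𝔪) := Quotient.field 𝔪
  set φ : R[X] →+* (R ⧸ 𝔪)[X] := mapRingHom (Ideal.Quotient.mk 𝔪)
  have hφ : Function.Surjective φ := map_surjective _ Quotient.mk_surjective
  have hker : RingHom.ker φ = 𝔪.map C := by rw [ker_mapRingHom, mk_ker]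
  have hkerP : RingHom.ker φ ≤ P := hker ▸ map_comap_le
  have : (P.map φ).IsPrime := map_isPrime_of_surjective hφ hkerP
  have hcomap : (P.map φ).comap φ = P := by
    rw [comap_map_of_surjective' φ hφ, sup_eq_left.mpr hkerP]
  have hbot : P.map φ = ⊥ := by
    refine eq_bot_of_disjoint_specialMonicSubmonoid (fun hX' ↦ hX ?_) ?_
    · rw [← hcomap, mem_comap]; simpa [φ] using hX'
    · refine Set.disjoint_left.mpr fun f hf hfP ↦ ?_
      obtain ⟨g, hg, rfl⟩ := exists_map_eq_of_mem_specialMonicSubmonoid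
        Ideal.Quotient.mk_surjective hf
      exact Set.disjoint_left.mp hS hg (hcomap ▸ hfP)
  refine le_antisymm ?_ map_comap_le
  rw [← hker, ← hcomap, hbot]
  rfl

attribute [local instance] Polynomial.algebra Polynomial.isLocalization in
theorem Polynomial.height_le_height_under_add_one {R : Type*} [CommRing R] [IsNoetherianRing R]
    (P : Ideal R[X]) [P.IsPrime] : P.height ≤ (P.under R).height + 1 := by
  set p := P.under R
  -- After localizing at `p`, the prime `P` lies in a maximal ideal over the maximal ideal `pRₚ`,
  -- and such maximal ideals have height `ht p + 1`.
  let Rₚ := Localization.AtPrime p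
  have disj : Disjoint (p.primeCompl.map C : Set R[X]) P := by
    refine Set.disjoint_left.mpr fun a ⟨b, hb⟩ ha ↦ hb.1 ?_
    rwa [SetLike.mem_coe, ← hb.2] at ha
  let P' : Ideal Rₚ[X] := P.map (algebraMap R[X] Rₚ[X])
  have : P'.IsPrime := IsLocalization.isPrime_of_isPrime_disjoint _ _ _ ‹_› disj
  have : P'.LiesOver (p.map (algebraMap R Rₚ)) :=
    IsLocalization.liesOver_of_isPrime_of_disjoint p.primeCompl _ _ disj
  obtain ⟨M, hM, hPM⟩ := P'.exists_le_maximal IsPrime.ne_top'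
  have : M.LiesOver (IsLocalRing.maximalIdeal Rₚ) := by
    refine ⟨(IsLocalRing.maximalIdeal.isMaximal Rₚ).eq_of_le IsPrime.ne_top' ?_⟩
    rw [← Localization.AtPrime.map_eq_maximalIdeal, LiesOver.over (P := P') (p := p.map _)]
    exact Ideal.comap_mono hPM
  calc P.height = P'.height := (IsLocalization.height_map_of_disjoint _ P disj).symm
    _ ≤ M.height := Ideal.height_mono hPM
    _ = (IsLocalRing.maximalIdeal Rₚ).height + 1 := Polynomial.height_eq_height_add_one _ M
    _ = p.height + 1 := by
      have := IsLocalization.height_under p.primeCompl (IsLocalRing.maximalIdeal Rₚ)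
      rw [IsLocalization.AtPrime.under_maximalIdeal Rₚ p] at this
      rw [this]

theorem height_le_ringKrullDim_of_disjoint_specialMonicSubmonoid {R : Type*} [CommRing R]
    [Nontrivial R] [IsNoetherianRing R] {P : Ideal R[X]} [P.IsPrime] (hX : X ∉ P)
    (hS : Disjoint (specialMonicSubmonoid R : Set R[X]) P) : P.height ≤ ringKrullDim R := by
  by_cases hmax : (P.under R).IsMaximal
  · rw [eq_map_under_of_disjoint_specialMonicSubmonoid hX hS, height_map_C]
    exact height_le_ringKrullDim_of_ne_top IsPrime.ne_top'
  · obtain ⟨𝔪, h𝔪, hle⟩ := (P.under R).exists_le_maximal IsPrime.ne_top'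
    have hlt : P.under R < 𝔪 := lt_of_le_of_ne hle fun h ↦ hmax (h ▸ h𝔪)
    calc (P.height : WithBot ℕ∞) ≤ ((P.under R).height + 1 : ℕ∞) := by
          exact_mod_cast Polynomial.height_le_height_under_add_one P
      _ ≤ 𝔪.height := by exact_mod_cast height_add_one_le_of_lt_of_isPrime hlt
      _ ≤ ringKrullDim R := height_le_ringKrullDim_of_ne_top IsPrime.ne_top'

/-- If `𝒜` is obtained from `R[T,T⁻¹]` by inverting all special monic
polynomials, then `dim 𝒜 ≤ dim R`. -/
theorem krullDim_localization_special_monic_le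
    (R : Type*) [CommRing R] [Nontrivial R] [IsNoetherianRing R] :
    ringKrullDim (Localization ((specialMonicSubmonoid R).map
      (Polynomial.toLaurent (R := R)).toMonoidHom)) ≤ ringKrullDim R := by
  set M := (specialMonicSubmonoid R).map (Polynomial.toLaurent (R := R)).toMonoidHom
  refine (ringKrullDim_le_iff_height_le _).mpr fun Q hQ ↦ ?_
  have hunit (g : LaurentPolynomial R) (hg : IsUnit (algebraMap _ (Localization M) g)) :
      g ∉ Q.under (LaurentPolynomial R) :=
    fun hgQ ↦ hQ.ne_top (Q.eq_top_of_isUnit_mem hgQ hg)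
  have hX : IsUnit (algebraMap R[X] (LaurentPolynomial R) X) := by
    simpa using LaurentPolynomial.isUnit_T 1
  rw [← IsLocalization.height_under M,
    ← IsLocalization.height_under (Submonoid.powers (X : R[X]))]
  refine height_le_ringKrullDim_of_disjoint_specialMonicSubmonoid (hunit _ (hX.map _)) ?_
  exact Set.disjoint_left.mpr fun f hf ↦
    hunit _ (IsLocalization.map_units (M := M) _ ⟨_, Submonoid.mem_map_of_mem _ hf⟩)
end
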